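/- Let μ be the uniform probability measure on D (Lebesgue measure restricted to D, normalized to total mass 1). Then the pushforward of μ under the projection (x,y) ↦ x is absolutely continuous with respect to Lebesgue measure with density f(s) = (12/π)·(s/2 − 𝟙_{s>1}·√(s² − s^{−2})) for 0 < s < (4/3)^{1/4}, and f(s) = 0 otherwise. In particular, the length of the shortest basis vector of a random unimodular lattice in dimension 2 has this probability density function. -/

import Mathlib

open MeasureTheory Real

/-- The region `D = {(x,y) : x > 0, |y| ≤ x/2, and if x > 1 then y² ≥ x² - x⁻²}`,
parametrizing a fundamental domain for `SL₂(ℝ)/SL₂^±(ℤ)`. -/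
def Dset : Set (ℝ × ℝ) :=
  {p | 0 < p.1 ∧ |p.2| ≤ p.1 / 2 ∧ (1 < p.1 → p.1 ^ 2 - (p.1 ^ 2)⁻¹ ≤ p.2 ^ 2)}

/-- The uniform probability measure on `D`. -/
noncomputable def μD : Measure (ℝ × ℝ) := (volume Dset)⁻¹ • volume.restrict Dset

/-!
For `s > 0` the slice of `D` at `x = s` is `{y | t(s) ≤ |y| ≤ s/2}`, where `t(s) = √(s² - s⁻²)` if
`s > 1` and `t(s) = 0` otherwise (`innerRadius`), so it has length `2 (s/2 - t(s))`. Since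
`(s² - s⁻²) - (s/2)² = (3 s⁴ - 4)/(4 s²)`, this is positive exactly for `s < (4/3)^{1/4}`.
By Fubini the slice length is the density of the pushforward of Lebesgue measure on `D`.
Integrating it with the antiderivative `(√(s⁴ - 1) - arctan √(s⁴ - 1))/2` of `√(s² - s⁻²)`
gives `vol D = π/6`, whence the normalising factor `12/π`.
-/

open Set

theorem MeasureTheory.Measure.map_fst_restrict_prod {α β : Type*} [MeasurableSpace α]
    [MeasurableSpace β] (μ : Measure α) (ν : Measure β) [SFinite μ] [SFinite ν] {s : Set (α × β)}
    (hs : MeasurableSet s) :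
    ((μ.prod ν).restrict s).map Prod.fst = μ.withDensity fun x => ν (Prod.mk x ⁻¹' s) := by
  ext A hA
  rw [map_apply measurable_fst hA, restrict_apply (measurable_fst hA), withDensity_apply _ hA,
    ← prod_apply hs, restrict_prod_eq_prod_univ, restrict_apply hs, prod_univ, inter_comm]

theorem Real.volume_setOf_le_abs_le {t b : ℝ} (ht : 0 ≤ t) :
    volume {y : ℝ | t ≤ |y| ∧ |y| ≤ b} = ENNReal.ofReal (2 * (b - t)) := by
  rcases le_or_gt t b with htb | hbt
  · have : {y : ℝ | t ≤ |y| ∧ |y| ≤ b} = Icc (-b) b \ Ioo (-t) t := by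
      ext y
      simp only [mem_ofPred_eq, mem_sdiff, mem_Icc, mem_Ioo, ← abs_le, ← abs_lt, not_lt]
      tauto
    rw [this, measure_sdiff (Ioo_subset_Icc_self.trans (Icc_subset_Icc (by linarith) htb))
      nullMeasurableSet_Ioo measure_Ioo_lt_top.ne, volume_Icc, volume_Ioo,
      ← ENNReal.ofReal_sub _ (by linarith)]
    ring_nf
  · have : {y : ℝ | t ≤ |y| ∧ |y| ≤ b} = ∅ :=
      eq_empty_of_forall_notMem fun y hy => by linarith [hy.1, hy.2]
    rw [this, measure_empty, ENNReal.ofReal_of_nonpos (by linarith)]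

/-- `(4/3)^{1/4} = √γ₂`, the largest length of a shortest nonzero vector of a unimodular lattice
in `ℝ²` (attained by the hexagonal lattice). -/
noncomputable def maxShortestLength : ℝ := (4 / 3 : ℝ) ^ ((1 : ℝ) / 4)

local notation "c" => maxShortestLength

theorem maxShortestLength_pow_four : c ^ 4 = 4 / 3 := by
  rw [maxShortestLength, ← rpow_natCast, ← rpow_mul (by norm_num)]
  norm_num

theorem one_lt_maxShortestLength : 1 < c := by
  rw [maxShortestLength, one_lt_rpow_iff_of_pos (by norm_num)]
  norm_num

theorem maxShortestLength_sq : c ^ 2 = 2 * (√3)⁻¹ := by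
  refine (sq_eq_sq₀ (by positivity) (by positivity)).mp ?_
  rw [← pow_mul, maxShortestLength_pow_four, mul_pow, inv_pow, sq_sqrt (by norm_num)]
  norm_num

noncomputable def innerRadius (s : ℝ) : ℝ := if 1 < s then √(s ^ 2 - (s ^ 2)⁻¹) else 0

noncomputable def halfSliceLength (s : ℝ) : ℝ :=
  if 0 < s ∧ s < c then s / 2 - innerRadius s else 0

theorem sq_sub_inv_sq_sub_half_sq {s : ℝ} (hs : s ≠ 0) :
    s ^ 2 - (s ^ 2)⁻¹ - (s / 2) ^ 2 = (3 * s ^ 4 - 4) / (4 * s ^ 2) := by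
  field_simp
  ring

theorem innerRadius_nonneg (s : ℝ) : 0 ≤ innerRadius s := by
  unfold innerRadius; split_ifs <;> positivity

theorem innerRadius_le_half {s : ℝ} (hs : 0 < s) (hc : s < c) : innerRadius s ≤ s / 2 := by
  unfold innerRadius
  split_ifs
  · rw [sqrt_le_left (by positivity), ← sub_nonpos, sq_sub_inv_sq_sub_half_sq hs.ne']
    have := maxShortestLength_pow_four ▸ pow_lt_pow_left₀ hc hs.le (by norm_num : 4 ≠ 0)
    exact div_nonpos_of_nonpos_of_nonneg (by linarith) (by positivity)
  · positivity

theorem half_le_innerRadius {s : ℝ} (hc : c ≤ s) : s / 2 ≤ innerRadius s := by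
  have hs : 1 < s := one_lt_maxShortestLength.trans_le hc
  have h43 : 4 / 3 ≤ s ^ 4 :=
    maxShortestLength_pow_four ▸ pow_le_pow_left₀ (by linarith [one_lt_maxShortestLength]) hc 4
  rw [innerRadius, if_pos hs, le_sqrt' (by positivity), ← sub_nonneg,
    sq_sub_inv_sq_sub_half_sq (by positivity)]
  exact div_nonneg (by linarith) (by positivity)

theorem halfSliceLength_nonneg (s : ℝ) : 0 ≤ halfSliceLength s := by
  unfold halfSliceLength
  split_ifs with h
  · linarith [innerRadius_le_half h.1 h.2]
  · rfl

theorem mem_Dset_iff_of_pos {s y : ℝ} (hs : 0 < s) :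
    (s, y) ∈ Dset ↔ innerRadius s ≤ |y| ∧ |y| ≤ s / 2 := by
  simp only [Dset, mem_ofPred_eq, innerRadius]
  split_ifs with h
  · rw [sqrt_le_left (abs_nonneg y), sq_abs]
    tauto
  · simp [hs, h]

theorem measurableSet_Dset : MeasurableSet Dset := by
  unfold Dset
  measurability

theorem volume_slice_Dset (s : ℝ) :
    volume (Prod.mk s ⁻¹' Dset) = ENNReal.ofReal (2 * halfSliceLength s) := by
  rcases le_or_gt s 0 with hs | hs
  · have : Prod.mk s ⁻¹' Dset = ∅ := eq_empty_of_forall_notMem fun y hy => hs.not_gt hy.1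
    simp [this, halfSliceLength, hs.not_gt]
  have hslice : Prod.mk s ⁻¹' Dset = {y | innerRadius s ≤ |y| ∧ |y| ≤ s / 2} := by
    ext y; exact mem_Dset_iff_of_pos hs
  rw [hslice, volume_setOf_le_abs_le (innerRadius_nonneg s), halfSliceLength]
  rcases lt_or_ge s c with hc | hc
  · rw [if_pos ⟨hs, hc⟩]
  · rw [if_neg fun h => hc.not_gt h.2, mul_zero,
      ENNReal.ofReal_of_nonpos (by linarith [half_le_innerRadius hc]), ENNReal.ofReal_zero]

theorem map_fst_volume_restrict_Dset :
    (volume.restrict Dset).map Prod.fst =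
      volume.withDensity fun s => ENNReal.ofReal (2 * halfSliceLength s) := by
  simp only [Measure.volume_eq_prod, Measure.map_fst_restrict_prod _ _ measurableSet_Dset,
    volume_slice_Dset]

theorem continuousOn_sqrt_sq_sub_inv_sq :
    ContinuousOn (fun s : ℝ => √(s ^ 2 - (s ^ 2)⁻¹)) (Ici 1) := by
  refine ((continuousOn_pow 2).sub ((continuousOn_pow 2).inv₀ fun s hs => ?_)).sqrt
  have : (1 : ℝ) ≤ s := hs
  positivity

theorem hasDerivAt_antiderivative_sqrt_sq_sub_inv_sq {x : ℝ} (hx : 1 < x) :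
    HasDerivAt (fun x => (√(x ^ 4 - 1) - arctan √(x ^ 4 - 1)) / 2) √(x ^ 2 - (x ^ 2)⁻¹) x := by
  have hu : 0 < x ^ 4 - 1 := by linarith [one_lt_pow₀ hx (n := 4) (by norm_num)]
  have hq : HasDerivAt (fun x => √(x ^ 4 - 1)) (4 * x ^ 3 / (2 * √(x ^ 4 - 1))) x := by
    simpa using ((hasDerivAt_pow 4 x).sub_const 1).sqrt hu.ne'
  refine ((hq.sub hq.arctan).div_const 2).congr_deriv ?_
  have hsq := sq_sqrt hu.le
  rw [show x ^ 2 - (x ^ 2)⁻¹ = (x ^ 4 - 1) / x ^ 2 by field_simp, sqrt_div hu.le,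
    sqrt_sq (by linarith)]
  field_simp
  rw [hsq]
  ring

theorem integral_sqrt_sq_sub_inv_sq :
    ∫ s in (1 : ℝ)..c, √(s ^ 2 - (s ^ 2)⁻¹) = ((√3)⁻¹ - π / 6) / 2 := by
  have hc := one_lt_maxShortestLength.le
  have hcont := continuousOn_sqrt_sq_sub_inv_sq.mono (Icc_subset_Ici_self : Icc 1 c ⊆ _)
  rw [intervalIntegral.integral_eq_sub_of_hasDerivAt_of_le hc (by fun_prop)
    (fun x hx => hasDerivAt_antiderivative_sqrt_sq_sub_inv_sq hx.1)
    (hcont.intervalIntegrable_of_Icc hc),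
    maxShortestLength_pow_four]
  norm_num [sqrt_inv]

theorem halfSliceLength_eq_indicator :
    halfSliceLength = (Ioo 0 c).indicator (· / 2) -
      (Ioo 1 c).indicator fun s => √(s ^ 2 - (s ^ 2)⁻¹) := by
  ext s
  simp only [halfSliceLength, innerRadius, Pi.sub_apply, indicator_apply, mem_Ioo]
  split_ifs <;> grind

theorem ContinuousOn.integrable_indicator_Ioo {f : ℝ → ℝ} {a b : ℝ}
    (hf : ContinuousOn f (Icc a b)) : Integrable ((Ioo a b).indicator f) :=
  (hf.integrableOn_Icc.mono_set Ioo_subset_Icc_self).integrable_indicator measurableSet_Ioo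

theorem integrable_indicator_Ioo_half : Integrable ((Ioo 0 c).indicator (· / 2 : ℝ → ℝ)) :=
  (continuous_id.div_const 2).continuousOn.integrable_indicator_Ioo

theorem integrable_indicator_Ioo_sqrt_sq_sub_inv_sq :
    Integrable ((Ioo 1 c).indicator fun s => √(s ^ 2 - (s ^ 2)⁻¹)) :=
  (continuousOn_sqrt_sq_sub_inv_sq.mono Icc_subset_Ici_self).integrable_indicator_Ioo

theorem integrable_halfSliceLength : Integrable halfSliceLength := by
  rw [halfSliceLength_eq_indicator]
  exact integrable_indicator_Ioo_half.sub integrable_indicator_Ioo_sqrt_sq_sub_inv_sq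

theorem integral_halfSliceLength : ∫ s, halfSliceLength s = π / 12 := by
  simp_rw [halfSliceLength_eq_indicator, Pi.sub_apply]
  rw [integral_sub integrable_indicator_Ioo_half
      integrable_indicator_Ioo_sqrt_sq_sub_inv_sq, integral_indicator measurableSet_Ioo,
    integral_indicator measurableSet_Ioo, ← integral_Ioc_eq_integral_Ioo,
    ← integral_Ioc_eq_integral_Ioo,
    ← intervalIntegral.integral_of_le (by linarith [one_lt_maxShortestLength]),
    ← intervalIntegral.integral_of_le one_lt_maxShortestLength.le, intervalIntegral.integral_div,
    integral_id, integral_sqrt_sq_sub_inv_sq, maxShortestLength_sq]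
  ring

theorem volume_Dset : volume Dset = ENNReal.ofReal (π / 6) := by
  rw [Measure.volume_eq_prod, Measure.prod_apply measurableSet_Dset]
  simp only [volume_slice_Dset]
  rw [← ofReal_integral_eq_lintegral_ofReal (integrable_halfSliceLength.const_mul 2)
    (ae_of_all _ fun s => mul_nonneg zero_le_two (halfSliceLength_nonneg s)), integral_const_mul,
    integral_halfSliceLength]
  congr 1
  ring

theorem stmt15 :
    Measure.map Prod.fst μD =
      volume.withDensity (fun s : ℝ =>
        ENNReal.ofReal
          (if 0 < s ∧ s < (4 / 3 : ℝ) ^ ((1 : ℝ) / 4) then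
            (12 / π) * (s / 2 - if 1 < s then Real.sqrt (s ^ 2 - (s ^ 2)⁻¹) else 0)
          else 0)) := by
  rw [μD, Measure.map_smul, map_fst_volume_restrict_Dset, volume_Dset,
    ← withDensity_smul' _ _ (by simp [pi_pos])]
  congr with s
  have h12 : (π / 6)⁻¹ * 2 = 12 / π := by field_simp; norm_num
  rw [Pi.smul_apply, smul_eq_mul, ← ENNReal.ofReal_inv_of_pos (by positivity),
    ← ENNReal.ofReal_mul (by positivity), ← mul_assoc, h12, halfSliceLength, mul_ite, mul_zero]
  rfl
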